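/- Let O_k be the set of odd integers that are at least 3 and less than 2k+1, and let A be a set of integers each at least 3 with 2k+1 ∉ A. Then ex(n, C_{2k+1}, 𝒞_A) ≥ (1/(2k+1)^{2k}) · ex(n, C_{2k+1}, 𝒞_{A∖O_k}). -/

import Mathlib

open SimpleGraph

/-- The number of copies of a graph `H` in `G`: subgraphs of `G` isomorphic to `H`. -/
noncomputable def copyCount {α β : Type*} (H : SimpleGraph α) (G : SimpleGraph β) : ℕ :=
  Nat.card {G' : G.Subgraph // Nonempty (H ≃g G'.coe)}

/-- `G` contains no cycle of length `m`. -/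
def CycleFreeOf {β : Type*} (G : SimpleGraph β) (m : ℕ) : Prop :=
  ∀ (v : β) (w : G.Walk v v), w.IsCycle → w.length ≠ m

/-- `ex(n, C_m, 𝒞_A)`. -/
noncomputable def exFam (n m : ℕ) (A : Set ℕ) : ℕ :=
  sSup {c | ∃ G : SimpleGraph (Fin n),
    (∀ a ∈ A, CycleFreeOf G a) ∧ c = _root_.copyCount (cycleGraph m) G}

/-!
Colour the vertices of `G` by `f : V → ℤ/(2k+1)` and keep only the edges between consecutive
colours, i.e. pass to `G ⊓ C_{2k+1}.comap f`. An odd closed walk in this graph projects to an odd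
closed walk in `C_{2k+1}`, which must wind around it, so the graph has no odd cycle shorter
than `2k+1`: it avoids `𝒞_A` as soon as `G` avoids `𝒞_{A ∖ O_k}`. A fixed copy of `C_{2k+1}`
survives for at least a `(2k+1)^{-2k}` fraction of the colourings (those that follow the cycle,
from any starting colour), so double counting pairs (copy, colouring) gives the bound.
-/

open Finset

variable {V : Type*}

lemma CycleFreeOf.anti {G H : SimpleGraph V} (hle : H ≤ G) {m : ℕ} (hG : CycleFreeOf G m) :
    CycleFreeOf H m := fun v w hw hlen =>
  hG v (w.mapLe hle) (hw.mapLe hle) (by rw [Walk.length_mapLe, hlen])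

namespace SimpleGraph

lemma exists_natCast_add_eq_of_walk {R : Type*} [AddCommGroupWithOne R] {u v : R}
    (w : (circulantGraph ({1} : Set R)).Walk u v) :
    ∃ p q : ℕ, p + q = w.length ∧ u + p = v + q := by
  induction w with
  | nil => exact ⟨0, 0, rfl, rfl⟩
  | @cons a b c h w ih =>
    obtain ⟨p, q, hpq, he⟩ := ih
    rw [Walk.length_cons]
    rw [circulantGraph_adj] at h
    rcases h.2 with hab | hba
    · refine ⟨p, q + 1, by omega, ?_⟩
      rw [Set.mem_singleton_iff, sub_eq_iff_eq_add] at hab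
      push_cast
      rw [hab, add_comm 1 b, add_right_comm, he, add_assoc]
    · refine ⟨p + 1, q, by omega, ?_⟩
      rw [Set.mem_singleton_iff, sub_eq_iff_eq_add] at hba
      push_cast
      rw [← add_assoc, add_right_comm, add_comm a 1, ← hba, he]

open Fin.CommRing in
lemma cycleGraph_le_length_of_odd {n : ℕ} {u : Fin (n + 1)} (w : (cycleGraph (n + 1)).Walk u u)
    (hw : Odd w.length) : n + 1 ≤ w.length := by
  obtain ⟨p, q, hpq, he⟩ :=
    exists_natCast_add_eq_of_walk (w.mapLe (cycleGraph_eq_circulantGraph n).le)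
  rw [Walk.length_mapLe] at hpq
  have hmod : p ≡ q [MOD n + 1] := by
    simpa [Nat.ModEq, Fin.ext_iff, Fin.val_natCast] using add_left_cancel he
  have hne : p ≠ q := by
    rintro rfl
    obtain ⟨r, hr⟩ := hw
    omega
  rcases le_total p q with h | h
  · have := Nat.le_of_dvd (by omega) ((Nat.modEq_iff_dvd' h).1 hmod)
    omega
  · have := Nat.le_of_dvd (by omega) ((Nat.modEq_iff_dvd' h).1 hmod.symm)
    omega

lemma cycleFreeOf_comap_cycleGraph {n a : ℕ} (f : V → Fin (n + 1)) (ha : Odd a)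
    (han : a ≤ n) : CycleFreeOf ((cycleGraph (n + 1)).comap f) a := fun _ w _ hlen => by
  have := cycleGraph_le_length_of_odd (w.map (Hom.comap f _)) (by rwa [Walk.length_map, hlen])
  rw [Walk.length_map] at this
  omega

lemma cycleGraph_adj_add_right {n : ℕ} {u v c : Fin (n + 1)} :
    (cycleGraph (n + 1)).Adj (u + c) (v + c) ↔ (cycleGraph (n + 1)).Adj u v := by
  simp only [cycleGraph_adj', add_sub_add_right_eq_sub]

lemma pow_le_card_le_comap_cycleGraph [Finite V] {G : SimpleGraph V} {n : ℕ} {S : G.Subgraph}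
    (e : cycleGraph (n + 1) ≃g S.coe) :
    (n + 1) ^ (Nat.card V - n) ≤
      Nat.card {f : V → Fin (n + 1) // S.spanningCoe ≤ (cycleGraph (n + 1)).comap f} := by
  classical
  let extend (c : Fin (n + 1)) (g : ↥S.vertsᶜ → Fin (n + 1)) (v : V) : Fin (n + 1) :=
    if h : v ∈ S.verts then e.symm ⟨v, h⟩ + c else g ⟨v, h⟩
  have hextend (c g) : S.spanningCoe ≤ (cycleGraph (n + 1)).comap (extend c g) := by
    intro u v (huv : S.Adj u v)
    simp only [comap_adj, extend, dif_pos (S.edge_vert huv), dif_pos (S.edge_vert huv.symm)]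
    exact cycleGraph_adj_add_right.2 <| e.symm.map_adj_iff.2 huv
  have hinj : Function.Injective fun p : Fin (n + 1) × (↥S.vertsᶜ → Fin (n + 1)) =>
      (⟨extend p.1 p.2, hextend p.1 p.2⟩ :
        {f : V → Fin (n + 1) // S.spanningCoe ≤ (cycleGraph (n + 1)).comap f}) := by
    rintro ⟨c, g⟩ ⟨c', g'⟩ h
    have h' := congrArg Subtype.val h
    have hc : c = c' := by simpa [extend] using congrFun h' (e 0).1
    refine Prod.ext hc (funext fun v => ?_)
    simpa [extend, dif_neg v.2] using congrFun h' v.1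
  have hverts : S.verts.ncard = n + 1 := by
    rw [← Nat.card_coe_set_eq, ← Nat.card_congr e.toEquiv, Nat.card_eq_fintype_card,
      Fintype.card_fin]
  have hle : n + 1 ≤ Nat.card V := hverts ▸ Set.ncard_le_card _
  calc (n + 1) ^ (Nat.card V - n) = Nat.card (Fin (n + 1) × (↥S.vertsᶜ → Fin (n + 1))) := by
        rw [Nat.card_prod, Nat.card_fun, Nat.card_coe_set_eq, Set.ncard_compl, hverts,
          Nat.card_eq_fintype_card (α := Fin _), Fintype.card_fin, ← pow_succ']
        congr 1
        omega
    _ ≤ _ := Nat.card_le_card_of_injective _ hinj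

end SimpleGraph

variable {α : Type*}

lemma card_copies_le_copyCount_inf [Finite V] (H : SimpleGraph α) {G G' : SimpleGraph V} :
    Nat.card {S : G.Subgraph // Nonempty (H ≃g S.coe) ∧ S.spanningCoe ≤ G'} ≤
      _root_.copyCount H (G ⊓ G') := by
  refine Nat.card_le_card_of_injective (fun S =>
    ⟨{ verts := S.1.verts
       Adj := S.1.Adj
       adj_sub := fun h => ⟨S.1.adj_sub h, S.2.2 h⟩
       edge_vert := S.1.edge_vert
       symm := S.1.symm }, S.2.1⟩) ?_
  rintro ⟨S, _⟩ ⟨T, _⟩ h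
  exact Subtype.ext <| Subgraph.ext (congrArg (·.1.verts) h) (congrArg (·.1.Adj) h)

theorem copyCount_cycleGraph_le_pow_mul [Fintype V] (G : SimpleGraph V) {n M : ℕ}
    (hM : ∀ f : V → Fin (n + 1),
      _root_.copyCount (cycleGraph (n + 1)) (G ⊓ (cycleGraph (n + 1)).comap f) ≤ M) :
    _root_.copyCount (cycleGraph (n + 1)) G ≤ (n + 1) ^ n * M := by
  classical
  let copies : Finset G.Subgraph := {S | Nonempty (cycleGraph (n + 1) ≃g S.coe)}
  let survives (S : G.Subgraph) (f : V → Fin (n + 1)) : Prop :=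
    S.spanningCoe ≤ (cycleGraph (n + 1)).comap f
  have hcopies : _root_.copyCount (cycleGraph (n + 1)) G = #copies := by
    rw [_root_.copyCount, Nat.card_eq_fintype_card, Fintype.card_subtype]
  have hcount : #copies * (n + 1) ^ (Fintype.card V - n) ≤
      #(univ : Finset (V → Fin (n + 1))) * M := by
    refine card_mul_le_card_mul survives (fun S hS => ?_) (fun f _ => ?_)
    · obtain ⟨e⟩ := (mem_filter.1 hS).2
      simpa only [Nat.card_eq_fintype_card, Fintype.card_subtype, bipartiteAbove] using
        pow_le_card_le_comap_cycleGraph e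
    · refine le_trans (le_of_eq ?_) ((card_copies_le_copyCount_inf _).trans (hM f))
      rw [Nat.card_eq_fintype_card, Fintype.card_subtype, bipartiteBelow, filter_filter]
  rw [card_univ, Fintype.card_fun, Fintype.card_fin] at hcount
  rw [hcopies]
  refine Nat.le_of_mul_le_mul_right (c := (n + 1) ^ (Fintype.card V - n)) ?_ (by positivity)
  calc #copies * (n + 1) ^ (Fintype.card V - n) ≤ (n + 1) ^ Fintype.card V * M := hcount
    _ ≤ (n + 1) ^ (n + (Fintype.card V - n)) * M := by gcongr <;> omega
    _ = (n + 1) ^ n * M * (n + 1) ^ (Fintype.card V - n) := by ring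

lemma copyCount_le_exFam {n m : ℕ} {A : Set ℕ} {G : SimpleGraph (Fin n)}
    (hG : ∀ a ∈ A, CycleFreeOf G a) : _root_.copyCount (cycleGraph m) G ≤ exFam n m A :=
  le_csSup ((Set.finite_range fun G : SimpleGraph (Fin n) => _root_.copyCount (cycleGraph m) G)
    |>.subset (by rintro _ ⟨G, -, rfl⟩; exact ⟨G, rfl⟩)).bddAbove ⟨G, hG, rfl⟩

lemma exFam_le {n m c : ℕ} {A : Set ℕ}
    (h : ∀ G : SimpleGraph (Fin n), (∀ a ∈ A, CycleFreeOf G a) →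
      _root_.copyCount (cycleGraph m) G ≤ c) : exFam n m A ≤ c :=
  csSup_le' (by rintro _ ⟨G, hG, rfl⟩; exact h G hG)

theorem stmt_7_general (A : Set ℕ) (k n : ℕ) :
    exFam n (2 * k + 1) (A \ {a | Odd a ∧ 3 ≤ a ∧ a < 2 * k + 1})
      ≤ (2 * k + 1) ^ (2 * k) * exFam n (2 * k + 1) A := by
  refine exFam_le fun G hG => copyCount_cycleGraph_le_pow_mul G fun f =>
    copyCount_le_exFam fun a ha => ?_
  by_cases hO : Odd a ∧ 3 ≤ a ∧ a < 2 * k + 1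
  · exact (cycleFreeOf_comap_cycleGraph f hO.1 (by omega)).anti inf_le_right
  · exact (hG a ⟨ha, hO⟩).anti inf_le_left

/-- Let `O_k` be the odd integers in `[3, 2k+1)`, and `A` a set of integers each at least 3
with `2k+1 ∉ A`. Then `ex(n, C_{2k+1}, 𝒞_A) ≥ (1/(2k+1)^{2k}) · ex(n, C_{2k+1}, 𝒞_{A∖O_k})`. -/
theorem stmt_7 (A : Set ℕ) (hA : ∀ a ∈ A, 3 ≤ a) (k n : ℕ) (hk : 1 ≤ k)
    (h2k1 : 2 * k + 1 ∉ A) :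
    exFam n (2 * k + 1) (A \ {a | Odd a ∧ 3 ≤ a ∧ a < 2 * k + 1})
      ≤ (2 * k + 1) ^ (2 * k) * exFam n (2 * k + 1) A :=
  stmt_7_general A k n
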